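/- Let n ≥ 2, let Σ be a real n×2 matrix of rank 2, and let η ∈ ℝ². Then there exist indices i ≠ j in {1,…,n} and real numbers a, b such that a·(row i of Σ) + b·(row j of Σ) = ηᵀ and |a| + |b| equals the minimum of ‖π‖₁ over all π ∈ ℝⁿ with Σᵀπ = η. (Equal-minimum part of Proposition 1: restricting to a suitable two-derivative submarket achieves the same minimal ℓ1 norm as the full n-derivative market, so the problem with n = 2 and the problem with any n ≥ 2 have the same minimal ℓ1 norm of allocation.) -/

import Mathlib

/-!
The feasible set is a nonempty affine subspace on which the ℓ1 norm is coercive, so the minimizers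
form a nonempty compact set, which has an extreme point π by Krein–Milman. If π had more than two
nonzero entries, some nonzero kernel vector c of Σᵀ would be supported inside the support of π; for
small t no entry of π ± t c changes sign, so the ℓ1 norm is affine on that segment and both
endpoints are again minimizers, contradicting extremality. The (at most) two nonzero entries of π
give the submarket and the coefficients a, b.
-/

open Matrix Finset

theorem Matrix.exists_mulVec_eq_of_rank_eq {m n K : Type*} [Fintype m] [Fintype n] [Field K]
    (B : Matrix m n K) (hB : B.rank = Fintype.card m) (y : m → K) : ∃ x, B *ᵥ x = y := by
  have hrange : LinearMap.range B.mulVecLin = ⊤ :=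
    Submodule.eq_top_of_finrank_eq (by rw [← Matrix.rank, hB, Module.finrank_fintype_fun_eq_card])
  exact LinearMap.range_eq_top.mp hrange y

lemma Matrix.exists_ne_zero_vecMul_eq_zero_of_card_lt {ι κ : Type*} [Fintype ι] [Fintype κ]
    (A : Matrix ι κ ℝ) {s : Finset ι} (hs : Fintype.card κ < #s) :
    ∃ c : ι → ℝ, c ≠ 0 ∧ (∀ i ∉ s, c i = 0) ∧ c ᵥ* A = 0 := by
  have hdep : ¬ LinearIndepOn ℝ (fun i => (A i : κ → ℝ)) (s : Set ι) := fun h => by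
    have := h.fintype_card_le_finrank
    simp only [Finset.coe_sort_coe, Fintype.card_coe, Module.finrank_fintype_fun_eq_card] at this
    omega
  obtain ⟨f, hfs, hf0, hf⟩ := linearDepOn_iff'.mp hdep
  refine ⟨f, by simpa [DFunLike.ext_iff, Finsupp.ext_iff] using hf,
    fun i hi => Finsupp.notMem_support_iff.mp fun h => hi (hfs h), ?_⟩
  rwa [Finsupp.linearCombination_apply, Finsupp.sum_fintype _ _ (by simp), ← vecMul_eq_sum] at hf0

lemma exists_pair_ne_of_card_support_le_two {ι M : Type*} [Fintype ι] [Zero M] [DecidableEq M]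
    {f : ι → M} (hι : 2 ≤ Fintype.card ι) (hf : #{i | f i ≠ 0} ≤ 2) :
    ∃ i j, i ≠ j ∧ ∀ l, l ≠ i ∧ l ≠ j → f l = 0 := by
  classical
  obtain ⟨t, hst, -, ht⟩ := exists_subsuperset_card_eq (subset_univ _) hf (by simpa using hι)
  obtain ⟨i, j, hij, rfl⟩ := card_eq_two.mp ht
  refine ⟨i, j, hij, fun l hl => by_contra fun hfl => ?_⟩
  simpa [hl.1, hl.2] using hst (mem_filter.2 ⟨mem_univ l, hfl⟩)

lemma abs_add_add_abs_sub_of_abs_le {a b : ℝ} (h : |b| ≤ |a|) : |a + b| + |a - b| = 2 * |a| := by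
  rcases abs_cases a with ⟨ha, _⟩ | ⟨ha, _⟩ <;> rcases abs_cases b with ⟨hb, _⟩ | ⟨hb, _⟩ <;>
  rcases abs_cases (a + b) with ⟨h1, _⟩ | ⟨h1, _⟩ <;>
  rcases abs_cases (a - b) with ⟨h2, _⟩ | ⟨h2, _⟩ <;> linarith

open Topology Filter in
lemma exists_pos_mul_abs_le {ι : Type*} [Finite ι] {π c : ι → ℝ} (h : ∀ i, π i = 0 → c i = 0) :
    ∃ t : ℝ, 0 < t ∧ ∀ i, t * |c i| ≤ |π i| := by
  have hnear : ∀ i, ∀ᶠ t in 𝓝 (0 : ℝ), t * |c i| ≤ |π i| := fun i => by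
    by_cases hπ : π i = 0
    · simp [hπ, h i hπ]
    · refine (ContinuousAt.eventually_lt (by fun_prop) continuousAt_const ?_).mono fun _ => le_of_lt
      simpa using hπ
  obtain ⟨t, hle, ht⟩ := ((eventually_all.2 hnear).filter_mono nhdsWithin_le_nhds).and
    (self_mem_nhdsWithin (s := Set.Ioi (0 : ℝ))) |>.exists
  exact ⟨t, ht, hle⟩

noncomputable def l1Norm {ι : Type*} [Fintype ι] (π : ι → ℝ) : ℝ := ∑ i, |π i|

section

variable {ι κ : Type*} [Fintype ι]

lemma continuous_l1Norm : Continuous (l1Norm : (ι → ℝ) → ℝ) := by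
  unfold l1Norm; fun_prop

lemma norm_le_l1Norm (π : ι → ℝ) : ‖π‖ ≤ l1Norm π :=
  (pi_norm_le_iff_of_nonneg (sum_nonneg fun _ _ => abs_nonneg _)).2 fun i =>
    single_le_sum (f := fun i => |π i|) (fun _ _ => abs_nonneg _) (mem_univ i)

lemma isCompact_feasible_l1Norm_le (A : Matrix ι κ ℝ) (η : κ → ℝ) (r : ℝ) :
    IsCompact {π : ι → ℝ | Aᵀ *ᵥ π = η ∧ l1Norm π ≤ r} := by
  refine Metric.isCompact_of_isClosed_isBounded ?_ ?_
  · exact (isClosed_eq (by fun_prop) continuous_const).inter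
      (isClosed_le continuous_l1Norm continuous_const)
  · exact (Metric.isBounded_closedBall (x := 0) (r := r)).subset fun π hπ =>
      mem_closedBall_zero_iff.2 ((norm_le_l1Norm π).trans hπ.2)

lemma exists_isMinOn_l1Norm {A : Matrix ι κ ℝ} {η : κ → ℝ} (h : ∃ π, Aᵀ *ᵥ π = η) :
    ∃ π, Aᵀ *ᵥ π = η ∧ IsMinOn l1Norm {ρ | Aᵀ *ᵥ ρ = η} π := by
  obtain ⟨π₀, hπ₀⟩ := h
  obtain ⟨π, hπ, hmin⟩ := (isCompact_feasible_l1Norm_le A η (l1Norm π₀)).exists_isMinOn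
    ⟨π₀, hπ₀, le_rfl⟩ continuous_l1Norm.continuousOn
  refine ⟨π, hπ.1, fun ρ hρ => ?_⟩
  by_cases hle : l1Norm ρ ≤ l1Norm π₀
  · exact hmin ⟨hρ, hle⟩
  · exact hπ.2.trans (le_of_not_ge hle)

lemma card_support_le_of_mem_extremePoints [Fintype κ] {A : Matrix ι κ ℝ} {η : κ → ℝ} {r : ℝ}
    {π : ι → ℝ} (hmin : IsMinOn l1Norm {ρ | Aᵀ *ᵥ ρ = η} π)
    (hext : π ∈ {ρ | Aᵀ *ᵥ ρ = η ∧ l1Norm ρ ≤ r}.extremePoints ℝ) :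
    #{i | π i ≠ 0} ≤ Fintype.card κ := by
  by_contra! hcard
  obtain ⟨c, hc0, hcs, hcA⟩ := A.exists_ne_zero_vecMul_eq_zero_of_card_lt hcard
  obtain ⟨t, ht, htc⟩ := exists_pos_mul_abs_le (π := π) (c := c) fun i hi => hcs i (by simp [hi])
  have hfeas (s : ℝ) : Aᵀ *ᵥ (π + s • c) = η := by
    rw [mulVec_add, mulVec_smul, mulVec_transpose A c, hcA, smul_zero, add_zero, hext.1.1]
  have hfeas' : Aᵀ *ᵥ (π - t • c) = η := by simpa [sub_eq_add_neg] using hfeas (-t)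
  have hsum : l1Norm (π + t • c) + l1Norm (π - t • c) = 2 * l1Norm π := by
    simp only [l1Norm, ← sum_add_distrib, mul_sum]
    refine sum_congr rfl fun i _ => abs_add_add_abs_sub_of_abs_le ?_
    simpa [abs_mul, abs_of_pos ht] using htc i
  have hplus : l1Norm π ≤ l1Norm (π + t • c) := hmin (hfeas t)
  have hminus : l1Norm π ≤ l1Norm (π - t • c) := hmin hfeas'
  have hfix : π + t • c = π := hext.2 ⟨hfeas t, by linarith [hext.1.2]⟩
    ⟨hfeas', by linarith [hext.1.2]⟩ (mem_openSegment_add_sub π (t • c))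
  exact hc0 (smul_right_injective _ ht.ne' (by simpa using hfix))

end

/-- Equal-minimum part of Proposition 1: a suitable two-derivative submarket achieves
the same minimal ℓ1 norm as the full n-derivative market. -/
theorem two_asset_same_min (n : ℕ) (hn : 2 ≤ n) (A : Matrix (Fin n) (Fin 2) ℝ)
    (hrank : A.rank = 2) (η : Fin 2 → ℝ) :
    ∃ i j : Fin n, i ≠ j ∧ ∃ a b : ℝ,
      (∀ k : Fin 2, a * A i k + b * A j k = η k) ∧
      IsLeast ((fun π : Fin n → ℝ => ∑ l, |π l|) '' {π | Aᵀ *ᵥ π = η}) (|a| + |b|) := by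
  obtain ⟨πm, hπm, hmin⟩ := exists_isMinOn_l1Norm
    (Aᵀ.exists_mulVec_eq_of_rank_eq (by rw [rank_transpose, hrank, Fintype.card_fin]) η)
  obtain ⟨π, hπ⟩ := (isCompact_feasible_l1Norm_le A η (l1Norm πm)).extremePoints_nonempty
    ⟨πm, hπm, le_rfl⟩
  have hπmin : IsMinOn l1Norm {ρ | Aᵀ *ᵥ ρ = η} π := fun ρ hρ => hπ.1.2.trans (hmin hρ)
  obtain ⟨i, j, hij, hzero⟩ := exists_pair_ne_of_card_support_le_two (by simpa using hn)
    (card_support_le_of_mem_extremePoints hπmin hπ)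
  have hsum (f : Fin n → ℝ) (hf : ∀ l, π l = 0 → f l = 0) : ∑ l, f l = f i + f j :=
    Fintype.sum_eq_add i j hij fun l hl => hf l (hzero l hl)
  have hl1 : l1Norm π = |π i| + |π j| := hsum _ fun l hl => by simp [hl]
  refine ⟨i, j, hij, π i, π j, fun k => ?_, ⟨π, hπ.1.1, hl1⟩, ?_⟩
  · have hk := congrFun hπ.1.1 k
    rwa [mulVec_transpose, vecMul, dotProduct, hsum _ fun l hl => by simp [hl]] at hk
  · rintro _ ⟨ρ, hρ, rfl⟩
    exact hl1 ▸ hπmin hρ
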